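/- Let A := ℚ[H]/(H⁴) and consider the I-function of the quintic threefold I(q,z) := z·Σ_{d≥0} q^d · (Π_{k=1}^{5d}(5H + kz)) / (Π_{k=1}^{d}(H + kz)⁵), an element of A[z, z⁻¹][[q]] (each factor (H + kz)^{−1} is expanded as Σ_{i=0}^{3}(−1)^i H^i (kz)^{−i−1}, using H⁴ = 0). Let D_H be the operator D_H := z·q·d/dq + H (multiplication by H plus z times the q-logarithmic derivative). Then (D_H⁴ − 5q·(5D_H + z)(5D_H + 2z)(5D_H + 3z)(5D_H + 4z)) I(q,z) = 0, where the factors denote composition of the operators f ↦ 5D_H(f) + kz·f. -/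

import Mathlib

noncomputable section

open LaurentPolynomial

/-- The ring `A = ℚ[H]/(H⁴)`. -/
abbrev Aring : Type := Polynomial ℚ ⧸ Ideal.span ({Polynomial.X ^ 4} : Set (Polynomial ℚ))

/-- The class `H ∈ A`. -/
def Hcl : Aring := Ideal.Quotient.mk _ Polynomial.X

/-- The ring `A[z, z⁻¹]` of Laurent polynomials in `z` over `A`. -/
abbrev Rring : Type := LaurentPolynomial Aring

/-- The variable `z ∈ A[z, z⁻¹]`. -/
def zL : Rring := T 1

/-- `H` viewed in `A[z, z⁻¹]`. -/
def HL : Rring := LaurentPolynomial.C Hcl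

/-- The expansion of `(H + kz)⁻¹` as `Σ_{i=0}^{3} (−1)^i H^i (kz)^{−i−1}` (using `H⁴ = 0`). -/
def Einv (k : ℕ) : Rring :=
  ∑ i ∈ Finset.range 4,
    (-1 : Rring) ^ i * HL ^ i * algebraMap ℚ Rring (1 / (k : ℚ) ^ (i + 1)) * T (-(i + 1) : ℤ)

/-- The `I`-function of the quintic threefold:
`I(q,z) = z·Σ_{d≥0} q^d (Π_{k=1}^{5d}(5H + kz)) / (Π_{k=1}^{d}(H + kz)⁵)`,
an element of `A[z,z⁻¹][[q]]`. -/
def Iquintic : PowerSeries Rring :=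
  PowerSeries.mk fun d =>
    zL * (∏ k ∈ Finset.Icc 1 (5 * d), (5 * HL + (k : Rring) * zL))
      * ∏ k ∈ Finset.Icc 1 d, (Einv k) ^ 5

/-- The operator `z·q·d/dq` (coefficientwise `q`-logarithmic derivative times `z`). -/
def zqd (f : PowerSeries Rring) : PowerSeries Rring :=
  PowerSeries.mk fun n => (n : Rring) * zL * PowerSeries.coeff n f

/-- The operator `D_H = z·q·d/dq + H`. -/
def DH (f : PowerSeries Rring) : PowerSeries Rring :=
  zqd f + PowerSeries.C HL * f

/-- The operator `f ↦ 5·D_H(f) + kz·f`. -/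
def opk (k : ℕ) (f : PowerSeries Rring) : PowerSeries Rring :=
  5 * DH f + PowerSeries.C ((k : Rring) * zL) * f

/-! On `q^d`, `D_H` acts as multiplication by `H + dz` and `opk k` as multiplication by
`5(H + dz) + kz`. So in degree `0` the equation reads `H⁴ I₀ = 0`, and in degree `d + 1` it
reads `(H + (d+1)z)⁴ I_{d+1} = 5 ∏_{j=1}^{4} (5H + (5d + j)z) I_d`, which is the ratio of
consecutive terms of `I`: the factor `5H + (5d + 5)z = 5(H + (d+1)z)` of the numerator cancels
one factor of `(H + (d+1)z)⁵`, and `Einv (d+1)` inverts `H + (d+1)z` since `H` is nilpotent. -/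

open PowerSeries

lemma HL_pow_four : HL ^ 4 = 0 := by
  rw [HL, Hcl, ← map_pow, ← map_pow, Ideal.Quotient.eq_zero_iff_mem.mpr
    (Ideal.subset_span (Set.mem_singleton _)), map_zero]

lemma geom_sum_mul_add_eq_one {R : Type*} [CommRing R] {h a b : R} {n : ℕ}
    (hh : h ^ n = 0) (hab : a * b = 1) :
    (∑ i ∈ Finset.range n, (-h) ^ i * b ^ (i + 1)) * (h + a) = 1 := by
  have hsum : ∑ i ∈ Finset.range n, (-h) ^ i * b ^ (i + 1)
      = (∑ i ∈ Finset.range n, (-h * b) ^ i) * b := by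
    rw [Finset.sum_mul]
    exact Finset.sum_congr rfl fun i _ => by ring
  -- `b (h + a) = 1 + hb`, and the sum is the geometric series of `(1 + hb)⁻¹` cut off
  -- where `(hb)ⁿ = 0`.
  calc (∑ i ∈ Finset.range n, (-h) ^ i * b ^ (i + 1)) * (h + a)
      = (∑ i ∈ Finset.range n, (-h * b) ^ i) * (1 - -h * b) := by
        rw [hsum]; linear_combination (∑ i ∈ Finset.range n, (-h * b) ^ i) * hab
    _ = 1 := by rw [geom_sum_mul_neg, mul_pow, neg_pow, hh]; ring

lemma Einv_eq_sum (k : ℕ) :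
    Einv k = ∑ i ∈ Finset.range 4,
      (-HL) ^ i * (algebraMap ℚ Rring (k : ℚ)⁻¹ * T (-1)) ^ (i + 1) := by
  refine Finset.sum_congr rfl fun i _ => ?_
  rw [neg_pow HL, mul_pow (M := Rring), ← map_pow, T_pow, one_div, inv_pow,
    show ((i + 1 : ℕ) * -1 : ℤ) = -(i + 1) by push_cast; ring]
  ring

lemma Einv_mul (k : ℕ) (hk : k ≠ 0) : Einv k * (HL + k * zL) = 1 := by
  rw [Einv_eq_sum]
  refine geom_sum_mul_add_eq_one (R := Rring) HL_pow_four ?_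
  calc (k : Rring) * zL * (algebraMap ℚ Rring (k : ℚ)⁻¹ * T (-1))
      = algebraMap ℚ Rring ((k : ℚ) * (k : ℚ)⁻¹) * (T 1 * T (-1)) := by
        rw [map_mul, map_natCast, zL]; ring
    _ = 1 := by rw [mul_inv_cancel₀ (Nat.cast_ne_zero.mpr hk), ← T_add]; simp

lemma coeff_DH (f : PowerSeries Rring) (n : ℕ) :
    coeff n (DH f) = (n * zL + HL) * coeff n f := by
  simp only [DH, zqd, map_add, coeff_mk, coeff_C_mul]
  ring

lemma coeff_opk (k : ℕ) (f : PowerSeries Rring) (n : ℕ) :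
    coeff n (opk k f) = (5 * (n * zL + HL) + k * zL) * coeff n f := by
  rw [opk, map_add, ← map_ofNat (PowerSeries.C (R := Rring)), coeff_C_mul, coeff_C_mul, coeff_DH]
  ring

lemma coeff_Iquintic_succ_mul (n : ℕ) :
    coeff (n + 1) Iquintic * (HL + (n + 1) * zL) ^ 4
      = 5 * (5 * HL + (5 * n + 1) * zL) * (5 * HL + (5 * n + 2) * zL)
        * (5 * HL + (5 * n + 3) * zL) * (5 * HL + (5 * n + 4) * zL) * coeff n Iquintic := by
  have hE : Einv (n + 1) ^ 5 * (HL + (n + 1) * zL) ^ 5 = 1 := by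
    rw [← mul_pow (M := Rring), ← Nat.cast_succ, Einv_mul (n + 1) n.succ_ne_zero, one_pow]
  simp only [Iquintic, coeff_mk, show 5 * (n + 1) = 5 * n + 1 + 1 + 1 + 1 + 1 by ring,
    Finset.prod_Icc_succ_top (Nat.le_add_left 1 _)]
  push_cast
  linear_combination 5 * zL * (∏ k ∈ Finset.Icc 1 (5 * n), (5 * HL + k * zL))
    * (∏ k ∈ Finset.Icc 1 n, Einv k ^ 5) * (5 * HL + (5 * n + 1) * zL)
    * (5 * HL + (5 * n + 2) * zL) * (5 * HL + (5 * n + 3) * zL) * (5 * HL + (5 * n + 4) * zL) * hE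

/-- The Picard–Fuchs equation for the `I`-function of the quintic:
`(D_H⁴ − 5q·(5D_H + z)(5D_H + 2z)(5D_H + 3z)(5D_H + 4z)) I(q,z) = 0`. -/
theorem statement2 :
    DH (DH (DH (DH Iquintic)))
      - 5 * PowerSeries.X * opk 1 (opk 2 (opk 3 (opk 4 Iquintic))) = 0 := by
  refine PowerSeries.ext fun n => ?_
  rw [map_sub, map_zero, sub_eq_zero, mul_comm (5 : PowerSeries Rring) X, mul_assoc]
  rcases n with _ | n
  · simp only [coeff_zero_X_mul, coeff_DH, Nat.cast_zero, zero_mul, zero_add]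
    linear_combination coeff 0 Iquintic * HL_pow_four
  · rw [coeff_succ_X_mul, ← map_ofNat (PowerSeries.C (R := Rring)), coeff_C_mul]
    simp only [coeff_DH, coeff_opk]
    push_cast
    linear_combination coeff_Iquintic_succ_mul n
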